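/- arXiv:2411.04856 — 2 statements merged into one kernel-verified Lean document; each statement's English description precedes it below -/
import Mathlib

section
/- Let 𝔤 be a six-dimensional nilpotent real Lie algebra with an integrable Born structure (g, h, ω, A, B, J) such that both ±1-eigenspaces 𝔤₊ and 𝔤₋ of A are non-abelian Lie subalgebras. Then there exist Lie subalgebras 𝔤̃₊ and 𝔤̃₋ of 𝔤 with 𝔤̃₊ non-abelian and 𝔤̃₋ abelian, such that 𝔤 = 𝔤̃₊ ⊕ 𝔤̃₋ as vector spaces, h(X,Y) = 0 for all X ∈ 𝔤̃₊ and Y ∈ 𝔤̃₋, and J(𝔤̃₊) = 𝔤̃₋; in other words, there is another integrable Born structure on 𝔤 with the same metric h and complex structure J whose eigenspaces are 𝔤̃₊ ≅ 𝔥𝔢𝔦𝔰₃ and 𝔤̃₋ ≅ ℝ³. Conversely, if 𝔤 has an integrable Born structure with 𝔤₊ non-abelian and 𝔤₋ abelian, then there exist Lie subalgebras 𝔤̃₊, 𝔤̃₋, both non-abelian, with 𝔤 = 𝔤̃₊ ⊕ 𝔤̃₋, h(𝔤̃₊,𝔤̃₋) = 0, and J(𝔤̃₊) = 𝔤̃₋.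 -/
/-- A Born structure on a real Lie algebra `L`: nondegenerate symmetric bilinear forms
`g`, `h`, a nondegenerate alternating bilinear form `ω`, and endomorphisms `A`, `B`, `J`
with `g(AX,Y) = ω(X,Y)`, `g(BX,Y) = h(X,Y)`, `ω(JX,Y) = −h(X,Y)`,
`A² = B² = Id` and `J² = −Id`. -/
def IsBornStructure {L : Type*} [LieRing L] [LieAlgebra ℝ L]
    (g h ω : L →ₗ[ℝ] L →ₗ[ℝ] ℝ) (A B J : L →ₗ[ℝ] L) : Prop :=
  (∀ X Y, g X Y = g Y X) ∧ (∀ X, (∀ Y, g X Y = 0) → X = 0) ∧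
  (∀ X Y, h X Y = h Y X) ∧ (∀ X, (∀ Y, h X Y = 0) → X = 0) ∧
  (∀ X, ω X X = 0) ∧ (∀ X, (∀ Y, ω X Y = 0) → X = 0) ∧
  (∀ X Y, g (A X) Y = ω X Y) ∧
  (∀ X Y, g (B X) Y = h X Y) ∧
  (∀ X Y, ω (J X) Y = - h X Y) ∧
  (∀ X, A (A X) = X) ∧ (∀ X, B (B X) = X) ∧ (∀ X, J (J X) = -X)

/-- Integrability of a Born structure: `ω` is closed, the Nijenhuis tensor of `J`
vanishes, and the `±1`-eigenspaces of `A` are Lie subalgebras. -/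
def IsIntegrableBornStructure {L : Type*} [LieRing L] [LieAlgebra ℝ L]
    (g h ω : L →ₗ[ℝ] L →ₗ[ℝ] ℝ) (A B J : L →ₗ[ℝ] L) : Prop :=
  IsBornStructure g h ω A B J ∧
  (∀ X Y Z, ω ⁅X, Y⁆ Z + ω ⁅Y, Z⁆ X + ω ⁅Z, X⁆ Y = 0) ∧
  (∀ X Y, ⁅J X, J Y⁆ - J ⁅J X, Y⁆ - J ⁅X, J Y⁆ - ⁅X, Y⁆ = 0) ∧
  (∀ X Y, A X = X → A Y = Y → A ⁅X, Y⁆ = ⁅X, Y⁆) ∧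
  (∀ X Y, A X = -X → A Y = -Y → A ⁅X, Y⁆ = -⁅X, Y⁆)

/-!
Let `𝔤₊` be the `+1`-eigenspace of `A`. Since `A` anticommutes with `J`, `J 𝔤₊ = 𝔤₋`, and `𝔤₊`
is `h`-orthogonal to `J 𝔤₊`. For every `t`, the subspaces `P = (1 + t J) 𝔤₊` and `M = J P` are
again complementary, `h`-orthogonal and exchanged by `J`. If `[J X, J Y] = μ J [X, Y]` on `𝔤₊`,
the vanishing of the Nijenhuis tensor shows that `X ↦ (1 + t J) X` multiplies brackets by
`1 + t μ` and `X ↦ J (1 + t J) X` by `μ - t`. So `t = μ` makes `M` abelian and `P` a copy of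
`𝔤₊`, while if `𝔤₋` is abelian then `μ = 0` and `t = 1` keeps both non-abelian.

Such a `μ` exists because `𝔤₊`, `J 𝔤₊` and `(1 + J) 𝔤₊` are three-dimensional subalgebras of a
nilpotent Lie algebra, hence two-step nilpotent. Transported to `𝔤₊`, this gives two two-step
nilpotent brackets whose sum is again two-step nilpotent, and on a three-dimensional space this
forces them to be proportional as soon as the first one is non-zero.
-/

open Module LieModule

section Nilpotent

theorem LieSubmodule.eq_bot_of_le_lie_top {R L M : Type*} [CommRing R] [LieRing L]
    [LieAlgebra R L] [AddCommGroup M] [Module R M] [LieRingModule L M] [LieModule R L M]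
    [IsNilpotent L M] (N : LieSubmodule R L M) (h : N ≤ ⁅(⊤ : LieIdeal R L), N⁆) : N = ⊥ := by
  obtain ⟨k, hk⟩ := IsNilpotent.nilpotent R L M
  have hle : ∀ k, N ≤ lowerCentralSeries R L M k := by
    intro k
    induction k with
    | zero => exact le_top
    | succ k ih =>
      rw [lowerCentralSeries_succ]
      exact h.trans (LieSubmodule.mono_lie_right _ ih)
  exact le_bot_iff.mp (hk ▸ hle k)

variable {F K : Type*} [Field F] [LieRing K] [LieAlgebra F K] [LieRing.IsNilpotent K]

theorem LieAlgebra.lowerCentralSeries_one_eq_bot_of_sup_span_eq_top {x : K}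
    (hx : Submodule.span F {x} ⊔ (lowerCentralSeries F K K 1).toSubmodule = ⊤) :
    lowerCentralSeries F K K 1 = ⊥ := by
  refine LieSubmodule.eq_bot_of_le_lie_top _ ?_
  have hdecomp : ∀ a : K, ∃ s : F, ∃ c ∈ lowerCentralSeries F K K 1, a = s • x + c := by
    intro a
    obtain ⟨y, hy, c, hc, rfl⟩ := Submodule.mem_sup.mp (hx ▸ Submodule.mem_top : a ∈ _)
    obtain ⟨s, rfl⟩ := Submodule.mem_span_singleton.mp hy
    exact ⟨s, c, hc, rfl⟩
  have hmem : ∀ y, ∀ e ∈ lowerCentralSeries F K K 1,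
      ⁅y, e⁆ ∈ ⁅(⊤ : LieIdeal F K), lowerCentralSeries F K K 1⁆ :=
    fun y e he => LieSubmodule.lie_mem_lie (LieSubmodule.mem_top y) he
  rw [lowerCentralSeries_succ, lowerCentralSeries_zero, LieSubmodule.lie_le_iff]
  intro a _ b _
  obtain ⟨s, c, hc, rfl⟩ := hdecomp a
  obtain ⟨r, d, hd, rfl⟩ := hdecomp b
  have hexpand : ⁅s • x + c, r • x + d⁆ = s • ⁅x, d⁆ - r • ⁅x, c⁆ + ⁅c, d⁆ := by
    simp only [lie_add, add_lie, lie_smul, smul_lie, lie_self, smul_zero, ← lie_skew c x]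
    module
  rw [hexpand]
  exact add_mem (sub_mem (Submodule.smul_mem _ _ (hmem _ _ hd))
    (Submodule.smul_mem _ _ (hmem _ _ hc))) (hmem _ _ hd)

theorem LieAlgebra.lowerCentralSeries_two_eq_bot_of_finrank_le_three [FiniteDimensional F K]
    (hK : finrank F K ≤ 3) : lowerCentralSeries F K K 2 = ⊥ := by
  have finrank_eq_zero : ∀ N : LieIdeal F K, finrank F N = 0 ↔ N = ⊥ := fun N =>
    Submodule.finrank_eq_zero.trans (LieSubmodule.toSubmodule_eq_bot _)
  have hstrict : ∀ k, lowerCentralSeries F K K k ≠ ⊥ →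
      finrank F (lowerCentralSeries F K K (k + 1)) < finrank F (lowerCentralSeries F K K k) := by
    intro k hk
    refine Submodule.finrank_lt_finrank_of_lt (lt_of_le_of_ne ?_ fun heq => hk ?_)
    · exact (LieSubmodule.toSubmodule_le_toSubmodule _ _).mpr
        (antitone_lowerCentralSeries F K K k.le_succ)
    · refine LieSubmodule.eq_bot_of_le_lie_top _ ?_
      rw [← lowerCentralSeries_succ, ← LieSubmodule.toSubmodule_le_toSubmodule, heq]
  have hC1 : finrank F (lowerCentralSeries F K K 1) ≤ 1 := by
    by_contra! h2
    have hne : lowerCentralSeries F K K 1 ≠ ⊥ := fun h => by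
      rw [← finrank_eq_zero] at h; omega
    have h01 := hstrict 0 (ne_bot_of_le_ne_bot hne (antitone_lowerCentralSeries F K K zero_le_one))
    obtain ⟨x, hx⟩ : ∃ x, x ∉ lowerCentralSeries F K K 1 := by
      by_contra! hall
      rw [show lowerCentralSeries F K K 1 = lowerCentralSeries F K K 0 from
        eq_top_iff.mpr fun x _ => hall x] at h01
      exact lt_irrefl _ h01
    refine hne (lowerCentralSeries_one_eq_bot_of_sup_span_eq_top (x := x) ?_)
    refine Submodule.eq_top_of_finrank_eq (le_antisymm (Submodule.finrank_le _) ?_)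
    have hlt : (lowerCentralSeries F K K 1).toSubmodule <
        Submodule.span F {x} ⊔ (lowerCentralSeries F K K 1).toSubmodule :=
      lt_of_le_of_ne le_sup_right fun h =>
        hx (h ▸ Submodule.mem_sup_left (Submodule.mem_span_singleton_self x) :)
    have := Submodule.finrank_lt_finrank_of_lt hlt
    change 1 < finrank F (lowerCentralSeries F K K 1).toSubmodule at h2
    omega
  by_contra h2
  have h21 : finrank F (lowerCentralSeries F K K 2) < finrank F (lowerCentralSeries F K K 1) :=
    hstrict 1 (ne_bot_of_le_ne_bot h2 (antitone_lowerCentralSeries F K K one_le_two))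
  exact h2 ((finrank_eq_zero _).mp (by omega))

theorem LieSubalgebra.lie_lie_eq_zero_of_finrank_eq_three {L : Type*} [LieRing L]
    [LieAlgebra F L] [LieRing.IsNilpotent L] (K : LieSubalgebra F L) (hK : finrank F K = 3)
    {x y z : L} (hx : x ∈ K) (hy : y ∈ K) (hz : z ∈ K) : ⁅x, ⁅y, z⁆⁆ = 0 := by
  have : LieRing.IsNilpotent K :=
    Function.Injective.lieAlgebra_isNilpotent (f := K.incl) Subtype.coe_injective
  have : FiniteDimensional F K := .of_finrank_pos (by omega)
  have hmem : ⁅(⟨x, hx⟩ : K), ⁅(⟨y, hy⟩ : K), ⟨z, hz⟩⁆⁆ ∈ lowerCentralSeries F K K 2 :=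
    LieSubmodule.lie_mem_lie (LieSubmodule.mem_top _)
      (LieSubmodule.lie_mem_lie (LieSubmodule.mem_top _) (LieSubmodule.mem_top _))
  rw [LieAlgebra.lowerCentralSeries_two_eq_bot_of_finrank_le_three hK.le,
    LieSubmodule.mem_bot] at hmem
  exact congrArg Subtype.val hmem

end Nilpotent

section Bilinear

variable {F M N : Type*} [Field F] [AddCommGroup M] [Module F M] [AddCommGroup N] [Module F N]

theorem LinearMap.eq_zero_of_mem_span₂ (f : M →ₗ[F] M →ₗ[F] N) {s : Set M}
    (hs : ∀ x ∈ s, ∀ y ∈ s, f x y = 0) {x y : M} (hx : x ∈ Submodule.span F s)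
    (hy : y ∈ Submodule.span F s) : f x y = 0 :=
  LinearMap.eqOn_span (f := f.flip y) (g := 0)
    (fun x' hx' => LinearMap.eqOn_span (f := f x') (g := 0) (hs x' hx') hy) hx

def LinearMap.IsTwoStepNilpotentOn (β : M →ₗ[F] M →ₗ[F] M) (V : Submodule F M) : Prop :=
  ∀ X ∈ V, ∀ Y ∈ V, ∀ Z ∈ V, β X (β Y Z) = 0

variable {β β₁ β₂ : M →ₗ[F] M →ₗ[F] M} {V : Submodule F M}

theorem LinearMap.IsTwoStepNilpotentOn.span_range_eq (hV : finrank F V = 3) (hβ : β.IsAlt)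
    (hβV : ∀ X ∈ V, ∀ Y ∈ V, β X Y ∈ V) (hnil : β.IsTwoStepNilpotentOn V)
    {X Y : M} (hX : X ∈ V) (hY : Y ∈ V) (hXY : β X Y ≠ 0) :
    Submodule.span F (Set.range ![X, Y, β X Y]) = V := by
  have hXz : β X (β X Y) = 0 := hnil X hX X hX Y hY
  have hYz : β Y (β X Y) = 0 := hnil Y hY X hX Y hY
  have hli : LinearIndependent F ![X, Y, β X Y] := by
    rw [Fintype.linearIndependent_iff]
    intro c hc
    simp only [Fin.sum_univ_three, Matrix.cons_val_zero, Matrix.cons_val_one,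
      Matrix.cons_val_two, Matrix.tail_cons, Matrix.head_cons] at hc
    have h1 := congrArg (β X) hc
    have h0 := congrArg (β Y) hc
    simp only [map_add, map_smul, hβ.self_eq_zero, hXz, hYz, ← hβ.neg X Y, map_zero,
      smul_zero, zero_add, add_zero, smul_neg, neg_eq_zero, smul_eq_zero, hXY, or_false] at h0 h1
    simp only [h0, h1, zero_smul, zero_add, smul_eq_zero, hXY, or_false] at hc
    intro i; fin_cases i <;> assumption
  have : FiniteDimensional F V := .of_finrank_pos (by omega)
  refine Submodule.eq_of_le_of_finrank_eq ?_ (by rw [finrank_span_eq_card hli, hV]; rfl)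
  rw [Submodule.span_le, Set.range_subset_iff]
  intro i; fin_cases i
  exacts [hX, hY, hβV X hX Y hY]

theorem LinearMap.IsTwoStepNilpotentOn.exists_eq_smul (hV : finrank F V = 3)
    (h₁ : β₁.IsAlt) (h₂ : β₂.IsAlt)
    (hV₁ : ∀ X ∈ V, ∀ Y ∈ V, β₁ X Y ∈ V) (hV₂ : ∀ X ∈ V, ∀ Y ∈ V, β₂ X Y ∈ V)
    (n₁ : β₁.IsTwoStepNilpotentOn V) (n₂ : β₂.IsTwoStepNilpotentOn V)
    (n₁₂ : (β₁ + β₂).IsTwoStepNilpotentOn V)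
    {X₀ Y₀ : M} (hX₀ : X₀ ∈ V) (hY₀ : Y₀ ∈ V) (hne : β₁ X₀ Y₀ ≠ 0) :
    ∃ μ : F, ∀ X ∈ V, ∀ Y ∈ V, β₂ X Y = μ • β₁ X Y := by
  -- In the basis `X₀, Y₀, z = β₁ X₀ Y₀` write `β₂ X₀ Y₀ = c₀ X₀ + c₁ Y₀ + c₂ z`. The mixed
  -- identity gives `β₂ X₀ z = -c₁ z` and `β₂ Y₀ z = c₀ z`; two-step nilpotency of `β₂` then forces
  -- `c₀ = c₁ = 0`, and `β₂ - c₂ β₁` vanishes on the basis.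
  have hspan := n₁.span_range_eq hV h₁ hV₁ hX₀ hY₀ hne
  have cross : ∀ X ∈ V, ∀ Y ∈ V, ∀ Z ∈ V, β₁ X (β₂ Y Z) + β₂ X (β₁ Y Z) = 0 := by
    intro X hX Y hY Z hZ
    have := n₁₂ X hX Y hY Z hZ
    simp only [LinearMap.add_apply, map_add, n₁ X hX Y hY Z hZ, n₂ X hX Y hY Z hZ] at this
    rw [← this]; abel
  obtain ⟨c, hc⟩ := (Submodule.mem_span_range_iff_exists_fun F).mp
    (hspan ▸ hV₂ X₀ hX₀ Y₀ hY₀ : β₂ X₀ Y₀ ∈ Submodule.span F _)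
  simp only [Fin.sum_univ_three, Matrix.cons_val_zero, Matrix.cons_val_one,
      Matrix.cons_val_two, Matrix.tail_cons, Matrix.head_cons] at hc
  have hXz : β₁ X₀ (β₁ X₀ Y₀) = 0 := n₁ X₀ hX₀ X₀ hX₀ Y₀ hY₀
  have hYz : β₁ Y₀ (β₁ X₀ Y₀) = 0 := n₁ Y₀ hY₀ X₀ hX₀ Y₀ hY₀
  have hzV : β₁ X₀ Y₀ ∈ V := hV₁ X₀ hX₀ Y₀ hY₀
  have hXc : β₂ X₀ (β₁ X₀ Y₀) = -c 1 • β₁ X₀ Y₀ := by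
    have := cross X₀ hX₀ X₀ hX₀ Y₀ hY₀
    rw [← hc] at this
    simp only [map_add, map_smul, h₁.self_eq_zero, hXz, smul_zero, zero_add, add_zero] at this
    rw [neg_smul, eq_neg_iff_add_eq_zero, add_comm, this]
  have hYc : β₂ Y₀ (β₁ X₀ Y₀) = c 0 • β₁ X₀ Y₀ := by
    have := cross Y₀ hY₀ X₀ hX₀ Y₀ hY₀
    rw [← hc] at this
    simp only [map_add, map_smul, h₁.self_eq_zero, hYz, ← h₁.neg X₀ Y₀, smul_zero,
      add_zero] at this
    rw [← sub_eq_zero, ← this]; module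
  have hc1 : c 1 = 0 := by
    have := n₂ X₀ hX₀ X₀ hX₀ _ hzV
    rw [hXc, map_smul, hXc, smul_smul, smul_eq_zero] at this
    simpa [hne] using this
  have hc0 : c 0 = 0 := by
    have := n₂ Y₀ hY₀ Y₀ hY₀ _ hzV
    rw [hYc, map_smul, hYc, smul_smul, smul_eq_zero] at this
    simpa [hne] using this
  refine ⟨c 2, fun X hX Y hY => sub_eq_zero.mp ?_⟩
  have hf : (β₂ - c 2 • β₁).IsAlt := fun X => by simp [h₁.self_eq_zero, h₂.self_eq_zero]
  have key : ∀ i j : Fin 3, i ≤ j →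
      (β₂ - c 2 • β₁) (![X₀, Y₀, β₁ X₀ Y₀] i) (![X₀, Y₀, β₁ X₀ Y₀] j) = 0 := by
    intro i j hij
    fin_cases i <;> fin_cases j <;>
      simp [h₁.self_eq_zero, h₂.self_eq_zero, ← hc, hc0, hc1, hXc, hYc, hXz, hYz] at hij ⊢
  refine (β₂ - c 2 • β₁).eq_zero_of_mem_span₂ ?_ (hspan ▸ hX) (hspan ▸ hY)
  rintro _ ⟨i, rfl⟩ _ ⟨j, rfl⟩
  rcases le_total i j with hij | hij
  · exact key i j hij
  · rw [← hf.neg, key j i hij, neg_zero]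

end Bilinear

theorem LinearMap.IsTwoStepNilpotentOn.of_lie_map {F L : Type*} [Field F] [LieRing L]
    [LieAlgebra F L] [LieRing.IsNilpotent L] {β : L →ₗ[F] L →ₗ[F] L} {V : Submodule F L}
    (hV : finrank F V = 3) (hβV : ∀ X ∈ V, ∀ Y ∈ V, β X Y ∈ V) {f : L →ₗ[F] L}
    (hf : Function.Injective f) (hfβ : ∀ X ∈ V, ∀ Y ∈ V, ⁅f X, f Y⁆ = f (β X Y)) :
    β.IsTwoStepNilpotentOn V := by
  let K : LieSubalgebra F L :=
    { toSubmodule := V.map f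
      lie_mem' := by
        rintro _ _ ⟨X, hX, rfl⟩ ⟨Y, hY, rfl⟩
        rw [hfβ X hX Y hY]
        exact ⟨_, hβV X hX Y hY, rfl⟩ }
  have hK : finrank F K = 3 := (Submodule.equivMapOfInjective f hf V).finrank_eq.symm.trans hV
  intro X hX Y hY Z hZ
  apply hf
  rw [map_zero, ← hfβ X hX _ (hβV Y hY Z hZ), ← hfβ Y hY Z hZ]
  exact K.lie_lie_eq_zero_of_finrank_eq_three hK ⟨X, hX, rfl⟩ ⟨Y, hY, rfl⟩ ⟨Z, hZ, rfl⟩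

section ComplexStructure

variable {M : Type*} [AddCommGroup M] [Module ℝ M] {J : M →ₗ[ℝ] M}

theorem injective_of_apply_apply_eq_neg (hJ : ∀ X, J (J X) = -X) : Function.Injective J :=
  fun X Y hXY => by simpa [hJ] using congrArg J hXY

def twist (J : M →ₗ[ℝ] M) (t : ℝ) : M →ₗ[ℝ] M := LinearMap.id + t • J

@[simp] theorem twist_apply (t : ℝ) (X : M) : twist J t X = X + t • J X := rfl

theorem J_apply_twist (t : ℝ) (X : M) : J (twist J t X) = twist J t (J X) := by simp

theorem comp_twist_apply (hJ : ∀ X, J (J X) = -X) (t : ℝ) (X : M) :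
    (J ∘ₗ twist J t) X = J X - t • X := by
  simp [hJ, sub_eq_add_neg]

theorem twist_injective (hJ : ∀ X, J (J X) = -X) (t : ℝ) : Function.Injective (twist J t) := by
  refine (injective_iff_map_eq_zero _).mpr fun X hX => ?_
  have hJX : J X = t • X := by
    rw [← sub_eq_zero, ← comp_twist_apply hJ, LinearMap.comp_apply, hX, map_zero]
  have h1 : (1 + t ^ 2) • X = 0 := by rw [← hX, twist_apply, hJX]; module
  exact (smul_eq_zero.mp h1).resolve_left (by positivity)

theorem isCompl_map_twist (hJ : ∀ X, J (J X) = -X) {V : Submodule ℝ M}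
    (hV : IsCompl V (V.map J)) (t : ℝ) :
    IsCompl (V.map (twist J t)) (V.map (J ∘ₗ twist J t)) := by
  have ht : (1 + t ^ 2 : ℝ) ≠ 0 := by positivity
  constructor
  · rw [Submodule.disjoint_def]
    rintro _ ⟨X, hX, rfl⟩ ⟨Y, hY, hXY⟩
    rw [comp_twist_apply hJ, twist_apply] at hXY
    have hsum : X + t • Y = J (Y - t • X) := by
      rw [map_sub, map_smul]
      linear_combination (norm := module) -hXY
    have hXY0 : X + t • Y = 0 := Submodule.disjoint_def.mp hV.disjoint _
      (V.add_mem hX (V.smul_mem t hY))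
      (hsum ▸ Submodule.mem_map_of_mem (V.sub_mem hY (V.smul_mem t hX)))
    have hYX : Y = t • X := by
      have := congrArg J (hsum ▸ hXY0 : J (Y - t • X) = 0)
      rwa [hJ, map_zero, neg_eq_zero, sub_eq_zero] at this
    have h1 : (1 + t ^ 2) • X = 0 := by rw [← hXY0, hYX]; module
    rw [(smul_eq_zero.mp h1).resolve_left ht, map_zero]
  · rw [codisjoint_iff, eq_top_iff, ← hV.sup_eq_top, sup_le_iff]
    constructor
    · intro X hX
      have hX' : X = (1 + t ^ 2)⁻¹ • (twist J t X - t • (J ∘ₗ twist J t) X) := by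
        rw [comp_twist_apply hJ, twist_apply, eq_inv_smul_iff₀ ht]; module
      rw [hX']
      exact Submodule.smul_mem _ _ (Submodule.sub_mem _
        (Submodule.mem_sup_left ⟨X, hX, rfl⟩)
        (Submodule.smul_mem _ _ (Submodule.mem_sup_right ⟨X, hX, rfl⟩)))
    · rintro _ ⟨X, hX, rfl⟩
      have hX' : J X = (1 + t ^ 2)⁻¹ • (t • twist J t X + (J ∘ₗ twist J t) X) := by
        rw [comp_twist_apply hJ, twist_apply, eq_inv_smul_iff₀ ht]; module
      rw [hX']
      exact Submodule.smul_mem _ _ (Submodule.add_mem _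
        (Submodule.smul_mem _ _ (Submodule.mem_sup_left ⟨X, hX, rfl⟩))
        (Submodule.mem_sup_right ⟨X, hX, rfl⟩))

theorem apply_eq_zero_of_mem_map_twist (hJ : ∀ X, J (J X) = -X) {h : M →ₗ[ℝ] M →ₗ[ℝ] ℝ}
    (hhJ : ∀ X Y, h (J X) (J Y) = h X Y) {V : Submodule ℝ M}
    (hhV : ∀ X ∈ V, ∀ Y ∈ V, h X (J Y) = 0) (t : ℝ) :
    ∀ x ∈ V.map (twist J t), ∀ y ∈ V.map (J ∘ₗ twist J t), h x y = 0 := by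
  rintro _ ⟨X, hX, rfl⟩ _ ⟨Y, hY, rfl⟩
  have hJX : h (J X) Y = 0 := by
    rw [← hhJ, hJ, map_neg, LinearMap.neg_apply, hhV X hX Y hY, neg_zero]
  simp only [comp_twist_apply hJ, twist_apply, map_add, map_sub, map_smul, LinearMap.add_apply,
    LinearMap.smul_apply, smul_eq_mul, hhJ, hhV X hX Y hY, hJX]
  ring

end ComplexStructure

section LieComplexStructure

variable {L : Type*} [LieRing L] [LieAlgebra ℝ L] {J : L →ₗ[ℝ] L}

theorem lie_twist (hJ : ∀ X, J (J X) = -X)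
    (hN : ∀ X Y, ⁅J X, J Y⁆ - J ⁅J X, Y⁆ - J ⁅X, J Y⁆ - ⁅X, Y⁆ = 0) (t : ℝ) (U V : L) :
    ⁅twist J t U, twist J t V⁆ = twist J t (⁅U, V⁆ - t • J ⁅J U, J V⁆) := by
  have hN' := congrArg J (hN U V)
  simp only [map_sub, hJ, map_zero] at hN'
  simp only [twist_apply, lie_add, add_lie, lie_smul, smul_lie, map_sub, map_smul, hJ]
  linear_combination (norm := module) t • hN'

theorem lie_twist_of_lie_J_eq_smul (hJ : ∀ X, J (J X) = -X)
    (hN : ∀ X Y, ⁅J X, J Y⁆ - J ⁅J X, Y⁆ - J ⁅X, J Y⁆ - ⁅X, Y⁆ = 0) {μ : ℝ} {U V : L}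
    (h : ⁅J U, J V⁆ = μ • J ⁅U, V⁆) (t : ℝ) :
    ⁅twist J t U, twist J t V⁆ = (1 + t * μ) • twist J t ⁅U, V⁆ := by
  rw [lie_twist hJ hN, h, map_smul, hJ, ← map_smul]
  congr 1
  module

theorem lie_comp_twist_of_lie_J_eq_smul (hJ : ∀ X, J (J X) = -X)
    (hN : ∀ X Y, ⁅J X, J Y⁆ - J ⁅J X, Y⁆ - J ⁅X, J Y⁆ - ⁅X, Y⁆ = 0) {μ : ℝ} {U V : L}
    (h : ⁅J U, J V⁆ = μ • J ⁅U, V⁆) (t : ℝ) :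
    ⁅(J ∘ₗ twist J t) U, (J ∘ₗ twist J t) V⁆ = (μ - t) • (J ∘ₗ twist J t) ⁅U, V⁆ := by
  simp only [LinearMap.comp_apply, J_apply_twist]
  rw [lie_twist hJ hN, hJ, hJ, neg_lie, lie_neg, neg_neg, h, ← sub_smul, map_smul]

theorem exists_lie_J_eq_smul [LieRing.IsNilpotent L] (hJ : ∀ X, J (J X) = -X)
    (hN : ∀ X Y, ⁅J X, J Y⁆ - J ⁅J X, Y⁆ - J ⁅X, J Y⁆ - ⁅X, Y⁆ = 0) {V : LieSubalgebra ℝ L}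
    (hV : finrank ℝ V = 3) (hJV : ∀ X ∈ V, ∀ Y ∈ V, ⁅J X, J Y⁆ ∈ V.toSubmodule.map J)
    {X₀ Y₀ : L} (hX₀ : X₀ ∈ V) (hY₀ : Y₀ ∈ V) (hne : ⁅X₀, Y₀⁆ ≠ 0) :
    ∃ μ : ℝ, ∀ X ∈ V, ∀ Y ∈ V, ⁅J X, J Y⁆ = μ • J ⁅X, Y⁆ := by
  let β₁ : L →ₗ[ℝ] L →ₗ[ℝ] L := LieModule.toEnd ℝ L L
  -- the bracket of `J V` pulled back to `V` along `J`, whose inverse is `-J`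
  let β₂ : L →ₗ[ℝ] L →ₗ[ℝ] L := (β₁.compl₁₂ J J).compr₂ (-J)
  have hβ₁ : ∀ X Y, β₁ X Y = ⁅X, Y⁆ := fun _ _ => rfl
  have hβ₂ : ∀ X Y, β₂ X Y = -J ⁅J X, J Y⁆ := fun _ _ => rfl
  have hV₁ : ∀ X ∈ V, ∀ Y ∈ V, β₁ X Y ∈ V.toSubmodule := fun X hX Y hY => V.lie_mem hX hY
  have hV₂ : ∀ X ∈ V, ∀ Y ∈ V, β₂ X Y ∈ V.toSubmodule := by
    intro X hX Y hY
    obtain ⟨Z, hZ, hJZ⟩ := hJV X hX Y hY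
    rw [hβ₂, ← hJZ, hJ, neg_neg]
    exact hZ
  obtain ⟨μ, hμ⟩ := LinearMap.IsTwoStepNilpotentOn.exists_eq_smul hV
    (fun X => lie_self X) (fun X => by rw [hβ₂, lie_self, map_zero, neg_zero]) hV₁ hV₂
    -- `V`, `J V` and `(1 + J) V` are three-dimensional subalgebras of `L`
    (.of_lie_map hV hV₁ (f := LinearMap.id) Function.injective_id fun _ _ _ _ => rfl)
    (.of_lie_map hV hV₂ (injective_of_apply_apply_eq_neg hJ) fun X _ Y _ => by
      rw [hβ₂, map_neg, hJ, neg_neg])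
    (.of_lie_map hV (fun X hX Y hY => add_mem (hV₁ X hX Y hY) (hV₂ X hX Y hY))
      (twist_injective hJ 1) fun X _ Y _ => by
        simp only [lie_twist hJ hN, LinearMap.add_apply, hβ₁, hβ₂, one_smul, sub_eq_add_neg])
    hX₀ hY₀ hne
  refine ⟨μ, fun X hX Y hY => ?_⟩
  have := congrArg J (hμ X hX Y hY)
  rwa [hβ₂, map_neg, hJ, neg_neg, hβ₁, map_smul] at this

end LieComplexStructure

section ScaledImage

variable {F L : Type*} [Field F] [LieRing L] [LieAlgebra F L]

def LieSubalgebra.mapOfLieEqSMul (V : LieSubalgebra F L) (f : L →ₗ[F] L) {c : F}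
    (hf : ∀ X ∈ V, ∀ Y ∈ V, ⁅f X, f Y⁆ = c • f ⁅X, Y⁆) : LieSubalgebra F L where
  toSubmodule := V.toSubmodule.map f
  lie_mem' := by
    rintro _ _ ⟨X, hX, rfl⟩ ⟨Y, hY, rfl⟩
    rw [hf X hX Y hY, ← map_smul]
    exact Submodule.mem_map_of_mem (V.smul_mem c (V.lie_mem hX hY))

variable {V : LieSubalgebra F L} {f : L →ₗ[F] L} {c : F}
  {hf : ∀ X ∈ V, ∀ Y ∈ V, ⁅f X, f Y⁆ = c • f ⁅X, Y⁆}

theorem LieSubalgebra.lie_eq_zero_of_mapOfLieEqSMul (hc : c = 0) :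
    ∀ x ∈ V.mapOfLieEqSMul f hf, ∀ y ∈ V.mapOfLieEqSMul f hf, ⁅x, y⁆ = 0 := by
  rintro _ ⟨X, hX, rfl⟩ _ ⟨Y, hY, rfl⟩
  rw [hf X hX Y hY, hc, zero_smul]

theorem LieSubalgebra.exists_lie_ne_zero_of_mapOfLieEqSMul
    (hc : c ≠ 0) (hfi : Function.Injective f) {X₀ Y₀ : L} (hX₀ : X₀ ∈ V) (hY₀ : Y₀ ∈ V)
    (hne : ⁅X₀, Y₀⁆ ≠ 0) :
    ∃ x ∈ V.mapOfLieEqSMul f hf, ∃ y ∈ V.mapOfLieEqSMul f hf, ⁅x, y⁆ ≠ 0 := by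
  refine ⟨f X₀, ⟨X₀, hX₀, rfl⟩, f Y₀, ⟨Y₀, hY₀, rfl⟩, ?_⟩
  rw [hf X₀ hX₀ Y₀ hY₀, smul_ne_zero_iff]
  exact ⟨hc, (map_ne_zero_iff f hfi).mpr hne⟩

end ScaledImage

theorem isCompl_eqLocus_id_neg_id {F M : Type*} [Field F] [CharZero F] [AddCommGroup M]
    [Module F M] {A : M →ₗ[F] M} (hA : ∀ X, A (A X) = X) :
    IsCompl (LinearMap.eqLocus A LinearMap.id) (LinearMap.eqLocus A (-LinearMap.id)) := by
  constructor
  · rw [Submodule.disjoint_def]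
    intro X hp hm
    rw [LinearMap.mem_eqLocus] at hp hm
    have hX : X = -X := hp.symm.trans hm
    have h2 : (2 : F) • X = 0 := by
      rw [two_smul]
      nth_rewrite 2 [hX]
      exact add_neg_cancel X
    exact (smul_eq_zero.mp h2).resolve_left two_ne_zero
  · rw [codisjoint_iff, eq_top_iff]
    intro X _
    refine Submodule.mem_sup.mpr ⟨(2 : F)⁻¹ • (X + A X), ?_, (2 : F)⁻¹ • (X - A X), ?_, ?_⟩
    · simp [hA, add_comm]
    · simp [hA]
    · module

section Born

variable {L : Type*} [LieRing L] [LieAlgebra ℝ L] {g h ω : L →ₗ[ℝ] L →ₗ[ℝ] ℝ}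
  {A B J : L →ₗ[ℝ] L}

theorem IsBornStructure.A_J_eq_neg_J_A (hB : IsBornStructure g h ω A B J) (X : L) :
    A (J X) = -J (A X) := by
  obtain ⟨-, hg, -, -, -, -, hgA, hgB, hωJ, hA, hB2, hJ⟩ := hB
  have hBAJ : ∀ X, B X = -A (J X) := fun X => by
    refine (neg_eq_of_add_eq_zero_left (hg _ fun Y => ?_)).symm
    simp only [map_add, LinearMap.add_apply, hgA, hgB, hωJ, add_neg_cancel]
  have hBJ : B (J X) = A X := by rw [hBAJ, hJ, map_neg, neg_neg]
  have := congrArg A (hB2 (J X))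
  rw [hBJ, hBAJ, map_neg, hA] at this
  exact this.symm

theorem IsBornStructure.h_J_J (hB : IsBornStructure g h ω A B J) (X Y : L) :
    h (J X) (J Y) = h X Y := by
  obtain ⟨-, -, hh, -, hω, -, -, -, hωJ, -, -, hJ⟩ := hB
  rw [← neg_neg (h (J X) (J Y)), ← hωJ, hJ, map_neg, LinearMap.neg_apply, neg_neg,
    ← LinearMap.IsAlt.neg hω, hωJ, neg_neg, hh]

theorem IsBornStructure.h_J_eq_zero (hB : IsBornStructure g h ω A B J) {X Y : L}
    (hX : A X = X) (hY : A Y = Y) : h X (J Y) = 0 := by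
  obtain ⟨hg, -, hh, -, hω, -, hgA, -, hωJ, -, -, hJ⟩ := hB
  have hωYX : ω Y X = 0 := by
    have h₁ : ω Y X = g Y X := by rw [← hgA, hY]
    have h₂ : ω X Y = g Y X := by rw [← hgA, hX, hg]
    have h₃ := LinearMap.IsAlt.neg hω X Y
    linarith
  rw [hh, ← neg_neg (h (J Y) X), ← hωJ, hJ, map_neg, LinearMap.neg_apply, neg_neg, hωYX]

theorem IsBornStructure.map_J_eqLocus (hB : IsBornStructure g h ω A B J) :
    (LinearMap.eqLocus A LinearMap.id).map J = LinearMap.eqLocus A (-LinearMap.id) := by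
  obtain ⟨-, -, -, -, -, -, -, -, -, -, -, hJ⟩ := id hB
  apply le_antisymm
  · rintro _ ⟨X, hX, rfl⟩
    change A (J X) = -J X
    rw [hB.A_J_eq_neg_J_A, show A X = X from hX]
  · intro X hX
    refine ⟨-J X, ?_, by rw [map_neg, hJ, neg_neg]⟩
    change A (-J X) = -J X
    rw [map_neg, hB.A_J_eq_neg_J_A, show A X = -X from hX, map_neg, neg_neg]

theorem IsBornStructure.isCompl_map_J (hB : IsBornStructure g h ω A B J) :
    IsCompl (LinearMap.eqLocus A LinearMap.id) ((LinearMap.eqLocus A LinearMap.id).map J) := by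
  obtain ⟨-, -, -, -, -, -, -, -, -, hA, -, -⟩ := id hB
  exact hB.map_J_eqLocus ▸ isCompl_eqLocus_id_neg_id hA

theorem IsBornStructure.finrank_eqLocus_id [FiniteDimensional ℝ L]
    (hB : IsBornStructure g h ω A B J) (hdim : finrank ℝ L = 6) :
    finrank ℝ (LinearMap.eqLocus A LinearMap.id) = 3 := by
  obtain ⟨-, -, -, -, -, -, -, -, -, -, -, hJ⟩ := id hB
  have := Submodule.finrank_add_eq_of_isCompl hB.isCompl_map_J
  rw [← (Submodule.equivMapOfInjective J (injective_of_apply_apply_eq_neg hJ) _).finrank_eq,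
    hdim] at this
  omega

end Born

/-- On a six-dimensional nilpotent Lie algebra, an integrable Born structure whose
eigenspaces are both non-abelian (`𝔥𝔢𝔦𝔰₃`) can be replaced, keeping `h` and `J`, by
one whose eigenspaces are `𝔥𝔢𝔦𝔰₃` and `ℝ³`; and conversely one of type
`(𝔥𝔢𝔦𝔰₃, ℝ³)` can be replaced by one of type `(𝔥𝔢𝔦𝔰₃, 𝔥𝔢𝔦𝔰₃)`. -/
theorem heis3_to_R3
    (L : Type*) [LieRing L] [LieAlgebra ℝ L] [FiniteDimensional ℝ L]
    (hnil : LieRing.IsNilpotent L)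
    (hdim : Module.finrank ℝ L = 6)
    (g h ω : L →ₗ[ℝ] L →ₗ[ℝ] ℝ) (A B J : L →ₗ[ℝ] L)
    (hBorn : IsIntegrableBornStructure g h ω A B J) :
    (((∃ X Y : L, A X = X ∧ A Y = Y ∧ ⁅X, Y⁆ ≠ 0) ∧
      (∃ X Y : L, A X = -X ∧ A Y = -Y ∧ ⁅X, Y⁆ ≠ 0)) →
      ∃ P M : LieSubalgebra ℝ L,
        (∃ X ∈ P, ∃ Y ∈ P, ⁅X, Y⁆ ≠ 0) ∧
        (∀ X ∈ M, ∀ Y ∈ M, ⁅X, Y⁆ = 0) ∧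
        IsCompl P.toSubmodule M.toSubmodule ∧
        (∀ X ∈ P, ∀ Y ∈ M, h X Y = 0) ∧
        Submodule.map J P.toSubmodule = M.toSubmodule) ∧
    (((∃ X Y : L, A X = X ∧ A Y = Y ∧ ⁅X, Y⁆ ≠ 0) ∧
      (∀ X Y : L, A X = -X → A Y = -Y → ⁅X, Y⁆ = 0)) →
      ∃ P M : LieSubalgebra ℝ L,
        (∃ X ∈ P, ∃ Y ∈ P, ⁅X, Y⁆ ≠ 0) ∧
        (∃ X ∈ M, ∃ Y ∈ M, ⁅X, Y⁆ ≠ 0) ∧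
        IsCompl P.toSubmodule M.toSubmodule ∧
        (∀ X ∈ P, ∀ Y ∈ M, h X Y = 0) ∧
        Submodule.map J P.toSubmodule = M.toSubmodule) := by
  obtain ⟨hB, -, hN, hplus, hminus⟩ := hBorn
  obtain ⟨-, -, -, -, -, -, -, -, -, -, -, hJ⟩ := id hB
  let V : LieSubalgebra ℝ L :=
    { toSubmodule := LinearMap.eqLocus A LinearMap.id
      lie_mem' := fun {X Y} => hplus X Y }
  have hJV : ∀ X ∈ V, A (J X) = -J X := fun X hX => by rw [hB.A_J_eq_neg_J_A, show A X = X from hX]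
  have horth := apply_eq_zero_of_mem_map_twist hJ hB.h_J_J (V := V.toSubmodule)
    fun X hX Y hY => hB.h_J_eq_zero hX hY
  constructor
  · rintro ⟨⟨X₀, Y₀, hX₀, hY₀, hne⟩, -⟩
    obtain ⟨μ, hμ⟩ := exists_lie_J_eq_smul hJ hN (hB.finrank_eqLocus_id hdim)
      (fun X hX Y hY => (SetLike.ext_iff.mp hB.map_J_eqLocus _).mpr
        (hminus _ _ (hJV X hX) (hJV Y hY))) hX₀ hY₀ hne
    exact ⟨V.mapOfLieEqSMul _ fun X hX Y hY => lie_twist_of_lie_J_eq_smul hJ hN (hμ X hX Y hY) μ,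
      V.mapOfLieEqSMul _ fun X hX Y hY => lie_comp_twist_of_lie_J_eq_smul hJ hN (hμ X hX Y hY) μ,
      LieSubalgebra.exists_lie_ne_zero_of_mapOfLieEqSMul
        (add_pos_of_pos_of_nonneg one_pos (mul_self_nonneg μ)).ne'
        (twist_injective hJ μ) hX₀ hY₀ hne,
      LieSubalgebra.lie_eq_zero_of_mapOfLieEqSMul (sub_self μ),
      isCompl_map_twist hJ hB.isCompl_map_J μ, horth μ, (Submodule.map_comp _ _ _).symm⟩
  · rintro ⟨⟨X₀, Y₀, hX₀, hY₀, hne⟩, habel⟩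
    have hμ : ∀ X ∈ V, ∀ Y ∈ V, ⁅J X, J Y⁆ = (0 : ℝ) • J ⁅X, Y⁆ := fun X hX Y hY => by
      rw [habel _ _ (hJV X hX) (hJV Y hY), zero_smul]
    exact ⟨V.mapOfLieEqSMul _ fun X hX Y hY => lie_twist_of_lie_J_eq_smul hJ hN (hμ X hX Y hY) 1,
      V.mapOfLieEqSMul _ fun X hX Y hY => lie_comp_twist_of_lie_J_eq_smul hJ hN (hμ X hX Y hY) 1,
      LieSubalgebra.exists_lie_ne_zero_of_mapOfLieEqSMul (by norm_num)
        (twist_injective hJ 1) hX₀ hY₀ hne,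
      LieSubalgebra.exists_lie_ne_zero_of_mapOfLieEqSMul (by norm_num)
        ((injective_of_apply_apply_eq_neg hJ).comp (twist_injective hJ 1)) hX₀ hY₀ hne,
      isCompl_map_twist hJ hB.isCompl_map_J 1, horth 1, (Submodule.map_comp _ _ _).symm⟩
end

section
/- Let 𝔤 be a six-dimensional real Lie algebra that is two-step nilpotent, i.e. [[X,Y],Z] = 0 for all X, Y, Z ∈ 𝔤, and suppose 𝔤 carries an integrable Born structure (g, h, ω, A, B, J) such that both ±1-eigenspaces of A are abelian Lie subalgebras. Then the center of 𝔤 has dimension at least 3. -/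
/-!
The `±1`-eigenspaces `P`, `N` of `A` are complementary `ω`-isotropic subspaces, hence both
three-dimensional, and `J` exchanges them. As `P` and `N` are abelian, the center `𝔷` splits as
`(𝔷 ∩ P) ⊕ (𝔷 ∩ N)`, and the vanishing of the Nijenhuis tensor reads `⁅x, J y⁆ = ⁅y, J x⁆`
for `x, y` both in `P` or both in `N`; hence `J 𝔷 ⊆ 𝔷`. Closedness of `ω`, together with
`⁅𝔤, 𝔤⁆ ⊆ 𝔷`, then shows that every `x ∈ P` which is `ω`-orthogonal to `𝔷 ∩ N` is central.
These `x` form a subspace of `𝔷 ∩ P` of dimension at least `3 - dim (𝔷 ∩ N)`, so `dim 𝔷 ≥ 3`.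
-/

open Module Module.End LinearMap LieModule

section LinearAlgebra

variable {K V : Type*} [Field K] [AddCommGroup V] [Module K V]

theorem isCompl_eigenspace_one_neg_one [NeZero (2 : K)] {A : V →ₗ[K] V}
    (hA : ∀ x, A (A x) = x) : IsCompl (eigenspace A 1) (eigenspace A (-1)) := by
  constructor
  · rw [Submodule.disjoint_def]
    intro x hpos hneg
    rw [mem_eigenspace_iff, one_smul] at hpos
    rw [mem_eigenspace_iff, hpos, neg_one_smul, eq_neg_iff_add_eq_zero, ← two_smul K]
      at hneg
    exact (smul_eq_zero.mp hneg).resolve_left two_ne_zero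
  · rw [codisjoint_iff, eq_top_iff]
    intro x _
    refine Submodule.mem_sup.mpr ⟨(2⁻¹ : K) • (x + A x), ?_, (2⁻¹ : K) • (x - A x), ?_, ?_⟩
    · rw [mem_eigenspace_iff, map_smul, map_add, hA, add_comm, one_smul]
    · rw [mem_eigenspace_iff, map_smul, map_sub, hA, neg_one_smul, ← smul_neg, neg_sub]
    · rw [← smul_add, show x + A x + (x - A x) = (2 : K) • x by rw [two_smul]; abel, smul_smul,
        inv_mul_cancel₀ two_ne_zero, one_smul]

variable [FiniteDimensional K V]

theorem finrank_le_finrank_inf_orthogonal_add (B : LinearMap.BilinForm K V)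
    (U W : Submodule K V) : finrank K U ≤ finrank K ↥(U ⊓ B.orthogonal W) + finrank K W := by
  have h₁ := LinearMap.BilinForm.finrank_add_finrank_orthogonal' (B := B) W
  have h₂ := Submodule.finrank_sup_add_finrank_inf_eq U (B.orthogonal W)
  have h₃ := Submodule.finrank_le (U ⊔ B.orthogonal W)
  omega

theorem finrank_add_finrank_le_of_isotropic {B : LinearMap.BilinForm K V}
    (hB : B.SeparatingLeft) {W : Submodule K V} (hW : ∀ x ∈ W, ∀ y ∈ W, B x y = 0) :
    finrank K W + finrank K W ≤ finrank K V := by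
  have h₁ := LinearMap.BilinForm.finrank_add_finrank_orthogonal' (B := B) W
  rw [separatingLeft_iff_ker_eq_bot.mp hB, inf_bot_eq, finrank_bot, add_zero] at h₁
  have h₂ : finrank K W ≤ finrank K (B.orthogonal W) :=
    Submodule.finrank_mono fun y hy x hx ↦ hW x hx y hy
  omega

theorem two_mul_finrank_eq_of_isCompl_of_isotropic {B : LinearMap.BilinForm K V}
    (hB : B.SeparatingLeft) {U W : Submodule K V} (hUW : IsCompl U W)
    (hU : ∀ x ∈ U, ∀ y ∈ U, B x y = 0) (hW : ∀ x ∈ W, ∀ y ∈ W, B x y = 0) :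
    2 * finrank K U = finrank K V := by
  have := Submodule.finrank_add_eq_of_isCompl hUW
  have := finrank_add_finrank_le_of_isotropic hB hU
  have := finrank_add_finrank_le_of_isotropic hB hW
  omega

end LinearAlgebra

section LieAlgebra

variable {R L : Type*} [CommRing R] [LieRing L] [LieAlgebra R L]

theorem lie_apply_eq_of_nijenhuis {J : L →ₗ[R] L} (hJ : ∀ x, J (J x) = -x)
    (hNJ : ∀ x y, ⁅J x, J y⁆ - J ⁅J x, y⁆ - J ⁅x, J y⁆ - ⁅x, y⁆ = 0) {x y : L}
    (hxy : ⁅x, y⁆ = 0) (hJxy : ⁅J x, J y⁆ = 0) : ⁅x, J y⁆ = ⁅y, J x⁆ := by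
  have h : J ⁅J x, y⁆ + J ⁅x, J y⁆ = 0 := by
    rw [← neg_eq_zero, ← hNJ x y, hxy, hJxy]
    abel
  have := congrArg J h
  rw [map_add, hJ, hJ, map_zero, ← neg_add, neg_eq_zero, add_comm] at this
  rw [← lie_skew y (J x), eq_neg_iff_add_eq_zero, this]

structure IsAbelianBiLagrangian (ω : L →ₗ[R] L →ₗ[R] R) (P N : Submodule R L) : Prop where
  isCompl : IsCompl P N
  isotropic_left : ∀ x ∈ P, ∀ y ∈ P, ω x y = 0
  isotropic_right : ∀ x ∈ N, ∀ y ∈ N, ω x y = 0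
  lie_left : ∀ x ∈ P, ∀ y ∈ P, ⁅x, y⁆ = 0
  lie_right : ∀ x ∈ N, ∀ y ∈ N, ⁅x, y⁆ = 0

structure IsAdaptedComplexStructure (ω : L →ₗ[R] L →ₗ[R] R) (P N : Submodule R L)
    (J : L →ₗ[R] L) : Prop where
  mapsTo_left : ∀ x ∈ P, J x ∈ N
  mapsTo_right : ∀ x ∈ N, J x ∈ P
  apply_apply : ∀ x, J (J x) = -x
  apply_symm : ∀ x y, ω (J x) y = ω (J y) x
  nijenhuis : ∀ x y, ⁅J x, J y⁆ - J ⁅J x, y⁆ - J ⁅x, J y⁆ - ⁅x, y⁆ = 0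

variable {ω : L →ₗ[R] L →ₗ[R] R} {P N : Submodule R L} {J : L →ₗ[R] L}

namespace IsAbelianBiLagrangian

theorem symm (S : IsAbelianBiLagrangian ω P N) : IsAbelianBiLagrangian ω N P :=
  ⟨S.isCompl.symm, S.isotropic_right, S.isotropic_left, S.lie_right, S.lie_left⟩

theorem exists_add_eq (S : IsAbelianBiLagrangian ω P N) (x : L) :
    ∃ p ∈ P, ∃ n ∈ N, p + n = x :=
  Submodule.mem_sup.mp (S.isCompl.sup_eq_top ▸ Submodule.mem_top)

theorem mem_center_of_forall_lie (S : IsAbelianBiLagrangian ω P N) {x : L} (hx : x ∈ P)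
    (h : ∀ n ∈ N, ⁅n, x⁆ = 0) : x ∈ LieAlgebra.center R L := by
  rw [mem_maxTrivSubmodule]
  intro y
  obtain ⟨p, hp, n, hn, rfl⟩ := S.exists_add_eq y
  rw [add_lie, S.lie_left p hp x hx, h n hn, zero_add]

theorem mem_center_of_add_mem_center (S : IsAbelianBiLagrangian ω P N) {p n : L} (hp : p ∈ P)
    (hn : n ∈ N) (h : p + n ∈ LieAlgebra.center R L) : p ∈ LieAlgebra.center R L :=
  S.mem_center_of_forall_lie hp fun n' hn' ↦ by
    simpa [S.lie_right n' hn' n hn] using (mem_maxTrivSubmodule R L L _).mp h n'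

theorem center_inf_sup_center_inf (S : IsAbelianBiLagrangian ω P N) :
    (LieAlgebra.center R L).toSubmodule ⊓ P ⊔ (LieAlgebra.center R L).toSubmodule ⊓ N =
      (LieAlgebra.center R L).toSubmodule := by
  refine le_antisymm (sup_le inf_le_left inf_le_left) fun c hc ↦ ?_
  obtain ⟨p, hp, n, hn, rfl⟩ := S.exists_add_eq c
  have hpC := S.mem_center_of_add_mem_center hp hn hc
  have hnC : n ∈ LieAlgebra.center R L := by
    simpa using sub_mem (show p + n ∈ LieAlgebra.center R L from hc) hpC
  exact Submodule.add_mem_sup ⟨hpC, hp⟩ ⟨hnC, hn⟩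

end IsAbelianBiLagrangian

namespace IsAdaptedComplexStructure

theorem swap (T : IsAdaptedComplexStructure ω P N J) : IsAdaptedComplexStructure ω N P J :=
  ⟨T.mapsTo_right, T.mapsTo_left, T.apply_apply, T.apply_symm, T.nijenhuis⟩

theorem exists_apply_eq (T : IsAdaptedComplexStructure ω P N J) {n : L} (hn : n ∈ N) :
    ∃ p ∈ P, J p = n :=
  ⟨-J n, neg_mem (T.mapsTo_right n hn), by rw [map_neg, T.apply_apply, neg_neg]⟩

theorem lie_apply_comm (T : IsAdaptedComplexStructure ω P N J)
    (S : IsAbelianBiLagrangian ω P N) {x y : L} (hx : x ∈ P) (hy : y ∈ P) :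
    ⁅x, J y⁆ = ⁅y, J x⁆ :=
  lie_apply_eq_of_nijenhuis T.apply_apply T.nijenhuis (S.lie_left x hx y hy)
    (S.lie_right _ (T.mapsTo_left x hx) _ (T.mapsTo_left y hy))

theorem apply_mem_center_of_mem (T : IsAdaptedComplexStructure ω P N J)
    (S : IsAbelianBiLagrangian ω P N) {x : L} (hx : x ∈ P) (hxC : x ∈ LieAlgebra.center R L) :
    J x ∈ LieAlgebra.center R L :=
  S.symm.mem_center_of_forall_lie (T.mapsTo_left x hx) fun p hp ↦ by
    rw [T.lie_apply_comm S hp hx, ← lie_skew, (mem_maxTrivSubmodule R L L x).mp hxC, neg_zero]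

theorem apply_mem_center (T : IsAdaptedComplexStructure ω P N J)
    (S : IsAbelianBiLagrangian ω P N) {c : L} (hc : c ∈ LieAlgebra.center R L) :
    J c ∈ LieAlgebra.center R L := by
  rw [← LieSubmodule.mem_toSubmodule, ← S.center_inf_sup_center_inf] at hc
  obtain ⟨p, ⟨hpC, hp⟩, n, ⟨hnC, hn⟩, rfl⟩ := Submodule.mem_sup.mp hc
  rw [map_add]
  exact add_mem (T.apply_mem_center_of_mem S hp hpC)
    (T.swap.apply_mem_center_of_mem S.symm hn hnC)

theorem mem_center_of_forall_apply_eq_zero (T : IsAdaptedComplexStructure ω P N J)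
    (S : IsAbelianBiLagrangian ω P N) (hω : ω.IsAlt) (hnd : ω.SeparatingLeft)
    (hclosed : ∀ x y z, ω ⁅x, y⁆ z + ω ⁅y, z⁆ x + ω ⁅z, x⁆ y = 0)
    (hcomm : ∀ x y : L, ⁅x, y⁆ ∈ LieAlgebra.center R L) {x : L} (hx : x ∈ P)
    (hxC : ∀ c ∈ LieAlgebra.center R L, ω c x = 0) : x ∈ LieAlgebra.center R L := by
  have hJxC : ∀ c ∈ LieAlgebra.center R L, ω c (J x) = 0 := fun c hc ↦ by
    rw [← hω.neg, T.apply_symm, hxC _ (T.apply_mem_center S hc), neg_zero]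
  refine S.mem_center_of_forall_lie hx fun z hz ↦ hnd _ fun y ↦ ?_
  obtain ⟨p, hp, n, hn, rfl⟩ := S.exists_add_eq y
  obtain ⟨b, hb, rfl⟩ := T.exists_apply_eq hn
  -- Closedness moves `⁅z, x⁆` paired with `J b` to `⁅x, J b⁆ = ⁅b, J x⁆` paired with `z`,
  -- and then to `⁅z, b⁆ ∈ 𝔷` paired with `J x`.
  have hzxp := hclosed z x p
  rw [S.lie_left x hx p hp, hxC _ (hcomm p z)] at hzxp
  have hzxn := hclosed z x (J b)
  rw [S.lie_right _ (T.mapsTo_left b hb) z hz, T.lie_apply_comm S hx hb] at hzxn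
  have hbxz := hclosed b (J x) z
  rw [S.lie_right _ (T.mapsTo_left x hx) z hz, hJxC _ (hcomm z b)] at hbxz
  simp only [map_zero, LinearMap.zero_apply, add_zero] at hzxp hzxn hbxz
  rw [map_add, hzxp, zero_add]
  linear_combination hzxn - hbxz

end IsAdaptedComplexStructure

end LieAlgebra

section FiniteDimensional

variable {K L : Type*} [Field K] [LieRing L] [LieAlgebra K L] [FiniteDimensional K L]
  {ω : L →ₗ[K] L →ₗ[K] K} {P N : Submodule K L} {J : L →ₗ[K] L}

theorem IsAbelianBiLagrangian.finrank_center_inf_add_finrank_center_inf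
    (S : IsAbelianBiLagrangian ω P N) :
    finrank K ↥((LieAlgebra.center K L).toSubmodule ⊓ P) +
      finrank K ↥((LieAlgebra.center K L).toSubmodule ⊓ N) =
        finrank K (LieAlgebra.center K L) := by
  have h := Submodule.finrank_sup_add_finrank_inf_eq ((LieAlgebra.center K L).toSubmodule ⊓ P)
    ((LieAlgebra.center K L).toSubmodule ⊓ N)
  rw [S.center_inf_sup_center_inf, (S.isCompl.disjoint.mono inf_le_right inf_le_right).eq_bot,
    finrank_bot, add_zero] at h
  exact h.symm

theorem IsAdaptedComplexStructure.finrank_le_finrank_center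
    (T : IsAdaptedComplexStructure ω P N J) (S : IsAbelianBiLagrangian ω P N)
    (hω : ω.IsAlt) (hnd : ω.SeparatingLeft)
    (hclosed : ∀ x y z, ω ⁅x, y⁆ z + ω ⁅y, z⁆ x + ω ⁅z, x⁆ y = 0)
    (hcomm : ∀ x y : L, ⁅x, y⁆ ∈ LieAlgebra.center K L) :
    finrank K P ≤ finrank K (LieAlgebra.center K L) := by
  let C := (LieAlgebra.center K L).toSubmodule
  have hsub : P ⊓ LinearMap.BilinForm.orthogonal ω (C ⊓ N) ≤ C ⊓ P := by
    rintro x ⟨hxP, hxN⟩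
    refine ⟨T.mem_center_of_forall_apply_eq_zero S hω hnd hclosed hcomm hxP fun c hc ↦ ?_, hxP⟩
    rw [← LieSubmodule.mem_toSubmodule, ← S.center_inf_sup_center_inf] at hc
    obtain ⟨p, hp, n, hn, rfl⟩ := Submodule.mem_sup.mp hc
    rw [map_add, LinearMap.add_apply, S.isotropic_left p hp.2 x hxP, hxN n hn, zero_add]
  calc finrank K P
      ≤ finrank K ↥(P ⊓ LinearMap.BilinForm.orthogonal ω (C ⊓ N)) + finrank K ↥(C ⊓ N) :=
        finrank_le_finrank_inf_orthogonal_add ω P (C ⊓ N)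
    _ ≤ finrank K ↥(C ⊓ P) + finrank K ↥(C ⊓ N) := by
        gcongr
        exact Submodule.finrank_mono hsub
    _ = finrank K (LieAlgebra.center K L) := S.finrank_center_inf_add_finrank_center_inf

end FiniteDimensional

namespace IsBornStructure

variable {L : Type*} [LieRing L] [LieAlgebra ℝ L] {g h ω : L →ₗ[ℝ] L →ₗ[ℝ] ℝ}
  {A B J : L →ₗ[ℝ] L}

theorem isAlt (hB : IsBornStructure g h ω A B J) : ω.IsAlt := by
  obtain ⟨-, -, -, -, hω, -⟩ := hB
  exact hω

theorem separatingLeft (hB : IsBornStructure g h ω A B J) : ω.SeparatingLeft := by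
  obtain ⟨-, -, -, -, -, hωnd, -⟩ := hB
  exact hωnd

theorem anticomm (hB : IsBornStructure g h ω A B J) (x : L) : A (J x) = -J (A x) := by
  obtain ⟨-, -, -, -, -, hωnd, hgA, hgB, hωJ, hA, hB2, hJ⟩ := hB
  have hABJ : ∀ x, A (B x) = -J x := fun x ↦ by
    refine eq_neg_of_add_eq_zero_left (hωnd _ fun y ↦ ?_)
    rw [map_add, LinearMap.add_apply, ← hgA, hA, hgB, hωJ, add_neg_cancel]
  have hBAJ : ∀ x, B x = -A (J x) := fun x ↦ by rw [← map_neg, ← hABJ, hA]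
  have h := hB2 (J (A x))
  simp only [hBAJ, map_neg, neg_neg, hJ, hA] at h
  rw [← h, neg_neg]

theorem isotropic_eigenspace (hB : IsBornStructure g h ω A B J) (μ : ℝ) :
    ∀ x ∈ eigenspace A μ, ∀ y ∈ eigenspace A μ, ω x y = 0 := by
  obtain ⟨hg, -, -, -, hω, -, hgA, -⟩ := hB
  intro x hx y hy
  rw [mem_eigenspace_iff] at hx hy
  have hxy : ω x y = μ * g x y := by
    rw [← hgA, hx, map_smul, LinearMap.smul_apply, smul_eq_mul]
  have hyx : ω y x = μ * g x y := by
    rw [← hgA, hy, map_smul, LinearMap.smul_apply, smul_eq_mul, hg]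
  linarith [LinearMap.IsAlt.neg (B := ω) hω x y]

theorem isAbelianBiLagrangian (hB : IsBornStructure g h ω A B J)
    (habP : ∀ X Y : L, A X = X → A Y = Y → ⁅X, Y⁆ = 0)
    (habM : ∀ X Y : L, A X = -X → A Y = -Y → ⁅X, Y⁆ = 0) :
    IsAbelianBiLagrangian ω (eigenspace A 1) (eigenspace A (-1)) := by
  refine ⟨?_, hB.isotropic_eigenspace 1, hB.isotropic_eigenspace (-1), fun x hx y hy ↦ ?_,
    fun x hx y hy ↦ ?_⟩
  · obtain ⟨-, -, -, -, -, -, -, -, -, hA, -⟩ := hB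
    exact isCompl_eigenspace_one_neg_one hA
  · exact habP x y (by simpa using hx) (by simpa using hy)
  · exact habM x y (by simpa using hx) (by simpa using hy)

theorem isAdaptedComplexStructure (hB : IsBornStructure g h ω A B J)
    (hNJ : ∀ x y, ⁅J x, J y⁆ - J ⁅J x, y⁆ - J ⁅x, J y⁆ - ⁅x, y⁆ = 0) :
    IsAdaptedComplexStructure ω (eigenspace A 1) (eigenspace A (-1)) J := by
  have hAJ := hB.anticomm
  obtain ⟨-, -, hh, -, -, -, -, -, hωJ, -, -, hJ⟩ := hB
  refine ⟨fun x hx ↦ ?_, fun x hx ↦ ?_, hJ, fun x y ↦ by rw [hωJ, hωJ, hh], hNJ⟩ <;>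
    rw [mem_eigenspace_iff] at hx ⊢ <;> rw [hAJ, hx]
  · rw [one_smul, neg_one_smul]
  · rw [neg_one_smul, map_neg, neg_neg, one_smul]

end IsBornStructure

/-- A six-dimensional two-step nilpotent Lie algebra with an integrable Born structure
whose both Lagrangian subalgebras are abelian has center of dimension at least three. -/
theorem center_ge_three
    (L : Type*) [LieRing L] [LieAlgebra ℝ L] [FiniteDimensional ℝ L]
    (hdim : Module.finrank ℝ L = 6)
    (h2step : ∀ X Y Z : L, ⁅⁅X, Y⁆, Z⁆ = 0)
    (g h ω : L →ₗ[ℝ] L →ₗ[ℝ] ℝ) (A B J : L →ₗ[ℝ] L)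
    (hBorn : IsIntegrableBornStructure g h ω A B J)
    (habP : ∀ X Y : L, A X = X → A Y = Y → ⁅X, Y⁆ = 0)
    (habM : ∀ X Y : L, A X = -X → A Y = -Y → ⁅X, Y⁆ = 0) :
    3 ≤ Module.finrank ℝ ↥(LieAlgebra.center ℝ L) := by
  obtain ⟨hB, hclosed, hNJ, -, -⟩ := hBorn
  have S := hB.isAbelianBiLagrangian habP habM
  have hcomm : ∀ X Y : L, ⁅X, Y⁆ ∈ LieAlgebra.center ℝ L := fun X Y ↦
    (mem_maxTrivSubmodule ℝ L L _).mpr fun Z ↦ by rw [← lie_skew, h2step, neg_zero]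
  have hP := two_mul_finrank_eq_of_isCompl_of_isotropic hB.separatingLeft S.isCompl
    S.isotropic_left S.isotropic_right
  have hPC := (hB.isAdaptedComplexStructure hNJ).finrank_le_finrank_center S hB.isAlt
    hB.separatingLeft hclosed hcomm
  omega
end
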